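/- arXiv:math/9810046 — 2 statements merged into one kernel-verified Lean document; each statement's English description precedes it below -/
import Mathlib

section
/- The function Φ̃ is smooth; its Fréchet derivative vanishes at the origin and at no other point of ℂ^p × ℂ^q. Moreover Φ̃(0,0) = ε ≠ 0, and consequently 0 is a regular value of Φ̃: at every point (z,w) with Φ̃(z,w) = 0 the Fréchet derivative of Φ̃ is nonzero (hence surjective onto ℝ). -/
/-- The weighted square norm `|z|²_c = ∑ c_j |z_j|²` on `ℂ^n`. -/
noncomputable def wnorm {n : ℕ} (c : Fin n → ℕ) (z : Fin n → ℂ) : ℝ :=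
  ∑ j, (c j : ℝ) * ‖z j‖ ^ 2

/-- The function `μ(z,w) = |z|²_a − |w|²_b` on `ℂ^p × ℂ^q`. -/
noncomputable def mu {p q : ℕ} (a : Fin p → ℕ) (b : Fin q → ℕ)
    (x : (Fin p → ℂ) × (Fin q → ℂ)) : ℝ :=
  wnorm a x.1 - wnorm b x.2

/-- `N(z,w) = |z|²_a + |w|²_b`. -/
noncomputable def Nfun {p q : ℕ} (a : Fin p → ℕ) (b : Fin q → ℕ)
    (x : (Fin p → ℂ) × (Fin q → ℂ)) : ℝ :=
  wnorm a x.1 + wnorm b x.2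

/-- The perturbed moment map `Φ̃(z,w) = μ(z,w) + ε·ρ(N(z,w))`. -/
noncomputable def Phit {p q : ℕ} (a : Fin p → ℕ) (b : Fin q → ℕ) (ε : ℝ) (ρ : ℝ → ℝ)
    (x : (Fin p → ℂ) × (Fin q → ℂ)) : ℝ :=
  mu a b x + ε * ρ (Nfun a b x)

lemma wnorm_smooth {n : ℕ} (c : Fin n → ℕ) : ContDiff ℝ (⊤ : ℕ∞) (wnorm c) := by
  unfold wnorm
  exact ContDiff.sum fun j _ => contDiff_const.mul
    ((contDiff_norm_sq ℝ).comp (contDiff_apply (𝕜 := ℝ) (E := ℂ) j))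

lemma wnorm_nonneg {n : ℕ} (c : Fin n → ℕ) (z : Fin n → ℂ) : 0 ≤ wnorm c z :=
  Finset.sum_nonneg fun j _ => mul_nonneg (Nat.cast_nonneg _) (sq_nonneg _)

lemma wnorm_pos {n : ℕ} (c : Fin n → ℕ) (hc : ∀ j, 0 < c j) {z : Fin n → ℂ}
    (hz : z ≠ 0) : 0 < wnorm c z := by
  obtain ⟨j, hj⟩ : ∃ j, z j ≠ 0 := by
    by_contra h; push_neg at h; exact hz (funext h)
  refine Finset.sum_pos' (fun i _ => mul_nonneg (Nat.cast_nonneg _) (sq_nonneg _))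
    ⟨j, Finset.mem_univ j, ?_⟩
  exact mul_pos (by exact_mod_cast hc j) (pow_pos (norm_pos_iff.2 hj) 2)

lemma wnorm_smul {n : ℕ} (c : Fin n → ℕ) (s : ℝ) (z : Fin n → ℂ) :
    wnorm c (s • z) = s ^ 2 * wnorm c z := by
  unfold wnorm
  rw [Finset.mul_sum]
  refine Finset.sum_congr rfl fun j _ => ?_
  have : ‖(s • z) j‖ = |s| * ‖z j‖ := by
    simp [Pi.smul_apply, norm_smul, Real.norm_eq_abs]
  rw [this, mul_pow, sq_abs]; ring

set_option synthInstance.maxHeartbeats 1000000 in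
lemma wnorm_fderiv_zero {n : ℕ} (c : Fin n → ℕ) :
    HasFDerivAt (wnorm c) (0 : (Fin n → ℂ) →L[ℝ] ℝ) 0 := by
  unfold wnorm
  have : (0 : (Fin n → ℂ) →L[ℝ] ℝ) = ∑ j : Fin n, (0 : (Fin n → ℂ) →L[ℝ] ℝ) := by simp
  rw [this]
  refine HasFDerivAt.fun_sum fun j _ => ?_
  have h1 : HasFDerivAt (fun z : Fin n → ℂ => z j)
      (ContinuousLinearMap.proj (R := ℝ) (φ := fun _ : Fin n => ℂ) j) 0 := by
    exact (ContinuousLinearMap.proj (R := ℝ) (φ := fun _ : Fin n => ℂ) j).hasFDerivAt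
  have h2 := h1.norm_sq
  have h3 := h2.const_mul (c j : ℝ)
  exact h3.congr_fderiv (by ext v; simp)


lemma phit_smooth {p q : ℕ} (a : Fin p → ℕ) (b : Fin q → ℕ) (ε : ℝ) {ρ : ℝ → ℝ}
    (hρ : ContDiff ℝ (⊤ : ℕ∞) ρ) : ContDiff ℝ (⊤ : ℕ∞) (Phit a b ε ρ) := by
  have hN : ContDiff ℝ (⊤ : ℕ∞) (Nfun a b (p := p) (q := q)) :=
    ((wnorm_smooth a).comp contDiff_fst).add ((wnorm_smooth b).comp contDiff_snd)
  exact (((wnorm_smooth a).comp contDiff_fst).sub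
    ((wnorm_smooth b).comp contDiff_snd)).add (contDiff_const.mul (hρ.comp hN))

lemma surj_of_ne_zero {E : Type*} [NormedAddCommGroup E] [NormedSpace ℝ E]
    {f : E →L[ℝ] ℝ} (hf : f ≠ 0) : Function.Surjective f := by
  obtain ⟨v, hv⟩ : ∃ v, f v ≠ 0 := by
    by_contra h; push_neg at h
    exact hf (ContinuousLinearMap.ext fun v => by simp [h v])
  intro y
  exact ⟨(y / f v) • v, by simp [map_smul, smul_eq_mul, div_mul_cancel₀ _ hv]⟩

lemma phit_fderiv_zero {p q : ℕ} (a : Fin p → ℕ) (b : Fin q → ℕ) (ε : ℝ) {ρ : ℝ → ℝ}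
    (hρ : ContDiff ℝ (⊤ : ℕ∞) ρ) :
    HasFDerivAt (Phit a b ε ρ) (0 : ((Fin p → ℂ) × (Fin q → ℂ)) →L[ℝ] ℝ) (0, 0) := by
  have hA : HasFDerivAt (fun x : (Fin p → ℂ) × (Fin q → ℂ) => wnorm a x.1)
      (0 : ((Fin p → ℂ) × (Fin q → ℂ)) →L[ℝ] ℝ) (0, 0) := by
    have := (wnorm_fderiv_zero a).comp ((0, 0) : (Fin p → ℂ) × (Fin q → ℂ)) (hasFDerivAt_fst (𝕜 := ℝ) (p := ((0, 0) : (Fin p → ℂ) × (Fin q → ℂ))))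
    exact this.congr_fderiv (by simp)
  have hB : HasFDerivAt (fun x : (Fin p → ℂ) × (Fin q → ℂ) => wnorm b x.2)
      (0 : ((Fin p → ℂ) × (Fin q → ℂ)) →L[ℝ] ℝ) (0, 0) := by
    have := (wnorm_fderiv_zero b).comp ((0, 0) : (Fin p → ℂ) × (Fin q → ℂ)) (hasFDerivAt_snd (𝕜 := ℝ) (p := ((0, 0) : (Fin p → ℂ) × (Fin q → ℂ))))
    exact this.congr_fderiv (by simp)
  have hmu : HasFDerivAt (mu a b)
      (0 : ((Fin p → ℂ) × (Fin q → ℂ)) →L[ℝ] ℝ) (0, 0) := by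
    exact (hA.sub hB).congr_fderiv (by simp)
  have hN : HasFDerivAt (Nfun a b)
      (0 : ((Fin p → ℂ) × (Fin q → ℂ)) →L[ℝ] ℝ) (0, 0) := by
    exact (hA.add hB).congr_fderiv (by simp)
  have hdρ : HasDerivAt ρ (deriv ρ (Nfun a b ((0, 0) : (Fin p → ℂ) × (Fin q → ℂ)))) (Nfun a b (0, 0)) :=
    ((hρ.differentiable (by norm_num)) _).hasDerivAt
  have hρN : HasFDerivAt (fun x : (Fin p → ℂ) × (Fin q → ℂ) => ρ (Nfun a b x))
      (0 : ((Fin p → ℂ) × (Fin q → ℂ)) →L[ℝ] ℝ) (0, 0) := by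
    exact (hdρ.comp_hasFDerivAt (0, 0) hN).congr_fderiv (by simp)
  exact (hmu.add (hρN.const_mul ε)).congr_fderiv (by simp)

lemma phit_fderiv_ne_zero {p q : ℕ} (a : Fin p → ℕ) (b : Fin q → ℕ) (ε : ℝ) {ρ : ℝ → ℝ}
    (ha : ∀ j, 0 < a j) (hb : ∀ j, 0 < b j)
    (hρ : ContDiff ℝ (⊤ : ℕ∞) ρ) (hερ' : ∀ t, |ε * deriv ρ t| < 1)
    (x : (Fin p → ℂ) × (Fin q → ℂ)) (hx : x ≠ (0, 0)) :
    fderiv ℝ (Phit a b ε ρ) x ≠ 0 := by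
  set A := wnorm a x.1 with hA
  set B := wnorm b x.2 with hB
  set v : (Fin p → ℂ) × (Fin q → ℂ) := (x.1, -x.2) with hv
  set L : ℝ → (Fin p → ℂ) × (Fin q → ℂ) := fun t => x + t • v with hL
  have hLd : HasDerivAt L v 0 := by
    exact ((hasDerivAt_const (0:ℝ) x).add ((hasDerivAt_id (0:ℝ)).smul_const v)).congr_deriv (by simp)
  -- explicit formula for Phit ∘ L
  have hform : ∀ t : ℝ, Phit a b ε ρ (L t) =
      ((1 + t) ^ 2 * A - (1 - t) ^ 2 * B) + ε * ρ ((1 + t) ^ 2 * A + (1 - t) ^ 2 * B) := by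
    intro t
    have h1 : (L t).1 = (1 + t) • x.1 := by
      show x.1 + t • x.1 = (1 + t) • x.1
      rw [add_smul, one_smul]
    have h2 : (L t).2 = (1 - t) • x.2 := by
      show x.2 + t • (-x.2) = (1 - t) • x.2
      rw [sub_smul, one_smul, smul_neg, sub_eq_add_neg]
    simp only [Phit, mu, Nfun, h1, h2, wnorm_smul]
    rfl
  -- derivative of the explicit formula
  have hk : HasDerivAt (fun t : ℝ => (1 + t) ^ 2 * A + (1 - t) ^ 2 * B) (2 * A - 2 * B) 0 := by
    have h1 : HasDerivAt (fun t : ℝ => (1 + t) ^ 2 * A) (2 * A) 0 := by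
      have := (((hasDerivAt_const (0:ℝ) (1:ℝ)).add (hasDerivAt_id 0)).pow 2).mul_const A
      exact this.congr_deriv (by norm_num)
    have h2 : HasDerivAt (fun t : ℝ => (1 - t) ^ 2 * B) (-(2 * B)) 0 := by
      have := (((hasDerivAt_const (0:ℝ) (1:ℝ)).sub (hasDerivAt_id 0)).pow 2).mul_const B
      exact this.congr_deriv (by norm_num)
    have := h1.add h2
    exact this.congr_deriv (by ring)
  have hk0 : ((1:ℝ) + 0) ^ 2 * A + (1 - 0) ^ 2 * B = A + B := by norm_num
  have hdρ : HasDerivAt ρ (deriv ρ (A + B)) (((1:ℝ) + 0) ^ 2 * A + (1 - 0) ^ 2 * B) := by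
    rw [hk0]; exact ((hρ.differentiable (by norm_num)) _).hasDerivAt
  have hρk : HasDerivAt (fun t : ℝ => ρ ((1 + t) ^ 2 * A + (1 - t) ^ 2 * B))
      (deriv ρ (A + B) * (2 * A - 2 * B)) 0 := hdρ.comp 0 hk
  have hh : HasDerivAt (fun t : ℝ => (1 + t) ^ 2 * A - (1 - t) ^ 2 * B) (2 * A + 2 * B) 0 := by
    have h1 : HasDerivAt (fun t : ℝ => (1 + t) ^ 2 * A) (2 * A) 0 := by
      have := (((hasDerivAt_const (0:ℝ) (1:ℝ)).add (hasDerivAt_id 0)).pow 2).mul_const A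
      exact this.congr_deriv (by norm_num)
    have h2 : HasDerivAt (fun t : ℝ => (1 - t) ^ 2 * B) (-(2 * B)) 0 := by
      have := (((hasDerivAt_const (0:ℝ) (1:ℝ)).sub (hasDerivAt_id 0)).pow 2).mul_const B
      exact this.congr_deriv (by norm_num)
    have := h1.sub h2
    exact this.congr_deriv (by ring)
  have hg : HasDerivAt (fun t => Phit a b ε ρ (L t))
      (2 * A + 2 * B + ε * (deriv ρ (A + B) * (2 * A - 2 * B))) 0 := by
    have := hh.add (hρk.const_mul ε)
    refine HasDerivAt.congr_of_eventuallyEq this (Filter.Eventually.of_forall fun t => ?_)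
    exact hform t
  -- chain rule side
  have hdiff : Differentiable ℝ (Phit a b ε ρ) :=
    (phit_smooth a b ε hρ).differentiable (by norm_num)
  have hL0 : L 0 = x := by simp [hL]
  have hg2 : HasDerivAt (fun t => Phit a b ε ρ (L t)) (fderiv ℝ (Phit a b ε ρ) x v) 0 := by
    have hF : HasFDerivAt (Phit a b ε ρ) (fderiv ℝ (Phit a b ε ρ) x) (L 0) := by
      rw [hL0]; exact (hdiff x).hasFDerivAt
    exact hF.comp_hasDerivAt 0 hLd
  have heq : fderiv ℝ (Phit a b ε ρ) x v =
      2 * A + 2 * B + ε * (deriv ρ (A + B) * (2 * A - 2 * B)) := hg2.unique hg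
  -- positivity
  have hApos : 0 ≤ A := wnorm_nonneg a x.1
  have hBpos : 0 ≤ B := wnorm_nonneg b x.2
  have hNpos : 0 < A + B := by
    by_cases h1 : x.1 = 0
    · have h2 : x.2 ≠ 0 := fun h2 => hx (Prod.ext h1 h2)
      have := wnorm_pos b hb h2
      linarith
    · have := wnorm_pos a ha h1
      linarith
  set r := ε * deriv ρ (A + B) with hr
  have hrlt : |r| < 1 := hερ' (A + B)
  have hr1 : -1 < r ∧ r < 1 := abs_lt.mp hrlt
  have hpos : 0 < 2 * A + 2 * B + ε * (deriv ρ (A + B) * (2 * A - 2 * B)) := by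
    have : 2 * A + 2 * B + ε * (deriv ρ (A + B) * (2 * A - 2 * B))
        = 2 * A * (1 + r) + 2 * B * (1 - r) := by rw [hr]; ring
    rw [this]
    rcases hApos.lt_or_eq with h | h
    · have t1 : 0 < 2 * A * (1 + r) := by
        have : (0:ℝ) < 1 + r := by linarith [hr1.1]
        positivity
      have t2 : 0 ≤ 2 * B * (1 - r) :=
        mul_nonneg (by linarith) (by linarith [hr1.2])
      linarith
    · have hBp : 0 < B := by linarith
      have t1 : 0 < 2 * B * (1 - r) :=
        mul_pos (by linarith) (by linarith [hr1.2])
      have t2 : 2 * A * (1 + r) = 0 := by rw [← h]; ring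
      linarith
  intro hzero
  rw [hzero] at heq
  simp at heq
  linarith [heq ▸ hpos]


/-- `Φ̃` is smooth, its derivative vanishes exactly at the origin, `Φ̃(0,0) = ε ≠ 0`,
and `0` is a regular value of `Φ̃`. -/
theorem stmt_5 {p q : ℕ} (hp : 1 ≤ p) (hq : 1 ≤ q)
    (a : Fin p → ℕ) (b : Fin q → ℕ) (ha : ∀ j, 0 < a j) (hb : ∀ j, 0 < b j)
    (δ ε : ℝ) (hδ : 0 < δ) (hε : ε ≠ 0) (hεδ : |ε| < δ)
    (ρ : ℝ → ℝ) (hρ : ContDiff ℝ (⊤ : ℕ∞) ρ)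
    (hρ0 : ∀ t, 0 ≤ ρ t) (hρ1 : ∀ t, ρ t ≤ 1)
    (hρlt : ∀ t < δ, ρ t = 1) (hρgt : ∀ t, 2 * δ < t → ρ t = 0)
    (hρ' : ∀ t, deriv ρ t ≤ 0) (hερ' : ∀ t, |ε * deriv ρ t| < 1) :
    ContDiff ℝ (⊤ : ℕ∞) (Phit a b ε ρ) ∧
    fderiv ℝ (Phit a b ε ρ) (0, 0) = 0 ∧
    (∀ x : (Fin p → ℂ) × (Fin q → ℂ), x ≠ (0, 0) → fderiv ℝ (Phit a b ε ρ) x ≠ 0) ∧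
    Phit a b ε ρ (0, 0) = ε ∧
    (∀ x : (Fin p → ℂ) × (Fin q → ℂ), Phit a b ε ρ x = 0 →
      fderiv ℝ (Phit a b ε ρ) x ≠ 0 ∧
      Function.Surjective ⇑(fderiv ℝ (Phit a b ε ρ) x)) := by
  have hval : Phit a b ε ρ ((0, 0) : (Fin p → ℂ) × (Fin q → ℂ)) = ε := by
    have h0 : Nfun a b ((0, 0) : (Fin p → ℂ) × (Fin q → ℂ)) = 0 := by
      simp [Nfun, wnorm]
    have hmu0 : mu a b ((0, 0) : (Fin p → ℂ) × (Fin q → ℂ)) = 0 := by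
      simp [mu, wnorm]
    rw [Phit, h0, hmu0, hρlt 0 hδ, mul_one, zero_add]
  refine ⟨phit_smooth a b ε hρ, (phit_fderiv_zero a b ε hρ).fderiv,
    fun x hx => phit_fderiv_ne_zero a b ε ha hb hρ hερ' x hx, hval, fun x hx => ?_⟩
  have hxne : x ≠ (0, 0) := fun h => hε (by rw [← hval, ← h, hx])
  have hne := phit_fderiv_ne_zero a b ε ha hb hρ hερ' x hxne
  exact ⟨hne, surj_of_ne_zero hne⟩
end

section
/- Let E be a real vector space and W ⊆ E a subspace. Suppose ω is an alternating r-linear form on E such that ω(ξ₀,…,ξ_k, v_{k+2},…,v_r) = 0 whenever ξ₀,…,ξ_k ∈ W (i.e. ω is annihilated by contraction with any k+1 vectors from W; this is vacuous if r ≤ k), and suppose σ is an alternating s-linear form on E annihilated by contraction with any l+1 vectors from W. Then the exterior (wedge) product ω ∧ σ, an alternating (r+s)-linear form on E, is annihilated by contraction with any k+l+1 vectors from W: (ω∧σ)(ξ₀,…,ξ_{k+l}, v_{k+l+2},…,v_{r+s}) = 0 whenever ξ₀,…,ξ_{k+l} ∈ W. (This is the compatibility of the Cartan filtration with wedge products: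 F_k ∧ F_l ⊆ F_{k+l}.) -/
/-!
Call a form `f` "vanishing on more than `k` arguments in `W`" if `f v = 0` whenever more than `k`
of the vectors `v i` lie in `W`. By alternation this permutation-invariant condition is equivalent
to the Cartan condition on the first `k + 1` slots (and it absorbs the vacuous case `r ≤ k`).
For it the claim is a pigeonhole argument: each shuffle term of `ω ∧ σ` splits the arguments
lying in `W` between `ω` and `σ`, so if there are more than `k + l` of them, then more than `k`
go to `ω` or more than `l` go to `σ`, and the term vanishes.
-/

open scoped TensorProduct

/-- The wedge (exterior) product of two real-valued alternating forms: the
antisymmetrized shuffle sum of their tensor product, realized via `domCoprod`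
(shuffle sum with values in `ℝ ⊗ ℝ`), multiplication `ℝ ⊗ ℝ ≃ ℝ`, and the
identification `Fin r ⊕ Fin s ≃ Fin (r + s)`. -/
noncomputable def wedgeForm {E : Type*} [AddCommGroup E] [Module ℝ E] {r s : ℕ}
    (ω : E [⋀^Fin r]→ₗ[ℝ] ℝ) (σ : E [⋀^Fin s]→ₗ[ℝ] ℝ) :
    E [⋀^Fin (r + s)]→ₗ[ℝ] ℝ :=
  AlternatingMap.domDomCongr finSumFinEquiv
    ((TensorProduct.lid ℝ ℝ).toLinearMap.compAlternatingMap
      (AlternatingMap.domCoprod ω σ))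

/-- An alternating `r`-form `ω` on `E` is annihilated by contraction with any
`k+1` vectors from the subspace `W` if either `r ≤ k` (the vacuous case: one
cannot insert `k+1` vectors) or `ω` vanishes whenever its first `k+1` arguments
lie in `W` (equivalently, by alternation, whenever any `k+1` arguments lie in
`W`).  This is membership in the Cartan filtration `F_k`. -/
def AnnByContraction {E : Type*} [AddCommGroup E] [Module ℝ E]
    (W : Submodule ℝ E) (k : ℕ) {r : ℕ} (ω : E [⋀^Fin r]→ₗ[ℝ] ℝ) : Prop :=
  r ≤ k ∨ ∀ v : Fin r → E, (∀ i : Fin r, (i : ℕ) ≤ k → v i ∈ W) → ω v = 0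

theorem Equiv.Perm.exists_forall_imp_of_card_le {ι : Type*} [Finite ι] {p q : ι → Prop}
    (h : Nat.card {i // p i} ≤ Nat.card {i // q i}) :
    ∃ π : Equiv.Perm ι, ∀ i, p i → q (π i) := by
  classical
  have := Fintype.ofFinite ι
  rw [Nat.card_eq_fintype_card, Nat.card_eq_fintype_card] at h
  obtain ⟨f⟩ := Function.Embedding.nonempty_of_card_le h
  let g : {i // p i} ↪ ι := f.trans (Function.Embedding.subtype q)
  refine ⟨g.toEquivRange.extendSubtype, fun i hi => ?_⟩
  obtain ⟨j, hj⟩ := g.toEquivRange.extendSubtype_mem i hi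
  exact hj ▸ (f j).2

namespace AlternatingMap

variable {R M N N' : Type*} [CommSemiring R] [AddCommMonoid M] [Module R M]
  [AddCommGroup N] [Module R N] [AddCommGroup N'] [Module R N'] {ι ι' : Type*}

def VanishesOnMoreThan (s : Set M) (k : ℕ) (f : M [⋀^ι]→ₗ[R] N) : Prop :=
  ∀ v : ι → M, k < Nat.card {i // v i ∈ s} → f v = 0

variable {s : Set M} {k l : ℕ}

/-- Alternation lets us permute any `k + 1` arguments lying in `s` into the slots `p`. -/
theorem vanishesOnMoreThan_of_forall [Fintype ι] [DecidableEq ι] {f : M [⋀^ι]→ₗ[R] N}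
    {p : ι → Prop} (hp : Nat.card {i // p i} ≤ k + 1)
    (hf : ∀ v : ι → M, (∀ i, p i → v i ∈ s) → f v = 0) :
    f.VanishesOnMoreThan s k := by
  intro v hv
  obtain ⟨π, hπ⟩ :=
    Equiv.Perm.exists_forall_imp_of_card_le (p := p) (q := fun i => v i ∈ s) (by omega)
  rw [← smul_eq_zero_iff_eq (Equiv.Perm.sign π), ← f.map_perm]
  exact hf _ hπ

theorem VanishesOnMoreThan.compAlternatingMap {f : M [⋀^ι]→ₗ[R] N}
    (hf : f.VanishesOnMoreThan s k) (g : N →ₗ[R] N') :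
    (g.compAlternatingMap f).VanishesOnMoreThan s k := fun v hv => by
  rw [LinearMap.compAlternatingMap_apply, hf v hv]
  exact g.map_zero

theorem VanishesOnMoreThan.domDomCongr {f : M [⋀^ι]→ₗ[R] N}
    (hf : f.VanishesOnMoreThan s k) (e : ι ≃ ι') :
    (f.domDomCongr e).VanishesOnMoreThan s k := fun _ hv =>
  hf _ (hv.trans_eq (Nat.card_congr (e.subtypeEquiv fun _ => Iff.rfl).symm))

theorem VanishesOnMoreThan.domCoprod [Fintype ι] [Fintype ι'] [DecidableEq ι] [DecidableEq ι']
    {a : M [⋀^ι]→ₗ[R] N} {b : M [⋀^ι']→ₗ[R] N'}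
    (ha : a.VanishesOnMoreThan s k) (hb : b.VanishesOnMoreThan s l) :
    (a.domCoprod b).VanishesOnMoreThan s (k + l) := by
  intro v hv
  rw [domCoprod_apply, _root_.sum_apply]
  refine Finset.sum_eq_zero fun σ _ => ?_
  induction σ using Quotient.inductionOn' with | h σ
  rw [domCoprod.summand_mk'', _root_.smul_apply, MultilinearMap.domDomCongr_apply,
    MultilinearMap.domCoprod_apply]
  have hcard : Nat.card {i // v (σ i) ∈ s} = Nat.card {i // v (σ (.inl i)) ∈ s}
      + Nat.card {i // v (σ (.inr i)) ∈ s} := by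
    rw [Nat.card_congr Equiv.subtypeSum, Nat.card_sum]
  have hv' : k + l < Nat.card {i // v (σ i) ∈ s} :=
    hv.trans_eq (Nat.card_congr (σ.subtypeEquiv fun _ => Iff.rfl).symm)
  rcases lt_or_ge k (Nat.card {i // v (σ (.inl i)) ∈ s}) with hk | hk
  · simp [ha _ hk]
  · simp [hb (fun i => v (σ (.inr i))) (by omega)]

theorem VanishesOnMoreThan.wedgeForm {E : Type*} [AddCommGroup E] [Module ℝ E] {s : Set E}
    {r s' k l : ℕ} {ω : E [⋀^Fin r]→ₗ[ℝ] ℝ} {σ : E [⋀^Fin s']→ₗ[ℝ] ℝ}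
    (hω : ω.VanishesOnMoreThan s k) (hσ : σ.VanishesOnMoreThan s l) :
    (_root_.wedgeForm ω σ).VanishesOnMoreThan s (k + l) :=
  ((hω.domCoprod hσ).compAlternatingMap _).domDomCongr _

end AlternatingMap

open AlternatingMap

theorem annByContraction_iff_vanishesOnMoreThan {E : Type*} [AddCommGroup E] [Module ℝ E]
    (W : Submodule ℝ E) (k : ℕ) {r : ℕ} (ω : E [⋀^Fin r]→ₗ[ℝ] ℝ) :
    AnnByContraction W k ω ↔ ω.VanishesOnMoreThan (W : Set E) k := by
  constructor
  · rintro (hr | hω)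
    · intro v hv
      have := Finite.card_subtype_le fun i : Fin r => v i ∈ (W : Set E)
      rw [Nat.card_fin] at this
      omega
    · refine vanishesOnMoreThan_of_forall ?_ hω
      calc Nat.card {i : Fin r // (i : ℕ) ≤ k}
          ≤ Nat.card (Fin (k + 1)) := Nat.card_le_card_of_injective
            (fun i => ⟨i.1, Nat.lt_succ_of_le i.2⟩)
            fun _ _ h => Subtype.ext (Fin.ext (by simpa using h))
        _ = k + 1 := Nat.card_fin _
  · intro hω
    refine or_iff_not_imp_left.2 fun hr v hv => hω v ?_
    calc k < Nat.card (Fin (k + 1)) := by simp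
      _ ≤ Nat.card {i // v i ∈ W} := Nat.card_le_card_of_injective
          (fun j => ⟨Fin.castLE (by omega) j, hv _ (Nat.lt_succ_iff.mp j.2)⟩)
          fun _ _ h => by simpa using h

/-- Compatibility of the Cartan filtration with wedge products:
`F_k ∧ F_l ⊆ F_{k+l}`.  If `ω` is annihilated by contraction with any `k+1`
vectors from `W` and `σ` is annihilated by contraction with any `l+1` vectors
from `W`, then `ω ∧ σ` is annihilated by contraction with any `k+l+1` vectors
from `W`. -/
theorem stmt_16 {E : Type*} [AddCommGroup E] [Module ℝ E] (W : Submodule ℝ E)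
    {r s : ℕ} (k l : ℕ) (ω : E [⋀^Fin r]→ₗ[ℝ] ℝ) (σ : E [⋀^Fin s]→ₗ[ℝ] ℝ)
    (hω : AnnByContraction W k ω) (hσ : AnnByContraction W l σ) :
    AnnByContraction W (k + l) (wedgeForm ω σ) := by
  rw [annByContraction_iff_vanishesOnMoreThan] at hω hσ ⊢
  exact hω.wedgeForm hσ
end
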